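/- Let N ≥ 1 and L ≥ 1, and let T(N) be the 2×2 real matrix with diagonal entries 1 + 1/N² and off-diagonal entries 2/N. Then Tr(T(N)^L) = (1 + 1/N)^{2L} + (1 − 1/N)^{2L} and (1,1)·T(N)^{L−1}·(1,1)ᵀ = 2·(1 + 1/N)^{2(L−1)}. Moreover, for any x ≥ 0 and sequences of positive integers N_n → ∞ and L_n with 2L_n/N_n → x, one has Tr(T(N_n)^{L_n}) → 2·cosh(x) and (1,1)·T(N_n)^{L_n−1}·(1,1)ᵀ → 2·e^{x}. Thus the spectral form factor of the parity-symmetric dual Ginibre model converges to the Ising scaling function 2 cosh x (periodic boundary conditions) and 2 e^x (open boundary conditions) in the Thouless scaling limit. -/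

import Mathlib

open Matrix Filter BigOperators

/-- The 2×2 transfer matrix of the parity-symmetric dual Ginibre model:
diagonal entries `1 + 1/N²`, off-diagonal entries `2/N`. -/
noncomputable def ginibreT (N : ℕ) : Matrix (Fin 2) (Fin 2) ℝ :=
  !![1 + 1 / (N : ℝ) ^ 2, 2 / (N : ℝ); 2 / (N : ℝ), 1 + 1 / (N : ℝ) ^ 2]

lemma ginibreT_pow (N L : ℕ) :
    (ginibreT N) ^ L =
      !![((1 + 1 / (N : ℝ)) ^ (2 * L) + (1 - 1 / (N : ℝ)) ^ (2 * L)) / 2,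
         ((1 + 1 / (N : ℝ)) ^ (2 * L) - (1 - 1 / (N : ℝ)) ^ (2 * L)) / 2;
         ((1 + 1 / (N : ℝ)) ^ (2 * L) - (1 - 1 / (N : ℝ)) ^ (2 * L)) / 2,
         ((1 + 1 / (N : ℝ)) ^ (2 * L) + (1 - 1 / (N : ℝ)) ^ (2 * L)) / 2] := by
  induction L with
  | zero =>
      ext i j
      fin_cases i <;> fin_cases j <;> simp [Matrix.one_apply]
  | succ L ih =>
      rw [pow_succ, ih]
      ext i j
      fin_cases i <;> fin_cases j <;>
        simp [ginibreT, Matrix.mul_apply, Fin.sum_univ_two, pow_succ, mul_add,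
          Nat.mul_succ] <;> ring

lemma ginibre_key (x a : ℝ) (Ns Ms : ℕ → ℕ)
    (hNtop : Tendsto (fun n => (Ns n : ℝ)) atTop atTop)
    (hscal : Tendsto (fun n => 2 * (Ms n : ℝ) / (Ns n : ℝ)) atTop (nhds x)) :
    Tendsto (fun n => (1 + a / (Ns n : ℝ)) ^ (2 * Ms n)) atTop
      (nhds (Real.exp (x * a))) := by
  have h1 : Tendsto (fun n => (Ns n : ℝ) * Real.log (1 + a / (Ns n : ℝ))) atTop (nhds a) :=
    (Real.tendsto_mul_log_one_add_div_atTop a).comp hNtop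
  have h2 : Tendsto (fun n => (2 * (Ms n : ℝ) / (Ns n : ℝ)) *
      ((Ns n : ℝ) * Real.log (1 + a / (Ns n : ℝ)))) atTop (nhds (x * a)) :=
    hscal.mul h1
  have hpos : ∀ᶠ n in atTop, 0 < 1 + a / (Ns n : ℝ) := by
    have : Tendsto (fun n => 1 + a / (Ns n : ℝ)) atTop (nhds 1) := by
      simpa [div_eq_mul_inv] using ((tendsto_inv_atTop_zero.comp hNtop).const_mul a).const_add 1
    filter_upwards [this.eventually_const_le (show (1:ℝ)/2 < 1 by norm_num)] with n hn
    linarith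
  have hne : ∀ᶠ n in atTop, (Ns n : ℝ) ≠ 0 := by
    filter_upwards [hNtop.eventually_ge_atTop 1] with n hn
    linarith
  have h3 : Tendsto (fun n => Real.exp ((2 * (Ms n : ℝ) / (Ns n : ℝ)) *
      ((Ns n : ℝ) * Real.log (1 + a / (Ns n : ℝ))))) atTop (nhds (Real.exp (x * a))) :=
    (Real.continuous_exp.tendsto _).comp h2
  refine h3.congr' ?_
  filter_upwards [hpos, hne] with n hp hn
  have heq : 2 * (Ms n : ℝ) / (Ns n : ℝ) * ((Ns n : ℝ) * Real.log (1 + a / (Ns n : ℝ)))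
      = ((2 * Ms n : ℕ) : ℝ) * Real.log (1 + a / (Ns n : ℝ)) := by
    push_cast
    field_simp
  rw [heq, Real.exp_nat_mul, Real.exp_log hp]

/-- Exact SFF of the parity-symmetric dual Ginibre model and its
Thouless scaling limit: `Tr(T^L) = (1+1/N)^{2L} + (1−1/N)^{2L}`,
`⟨η|T^{L−1}|η⟩ = 2(1+1/N)^{2(L−1)}`, and with `N_n → ∞`, `2L_n/N_n → x ≥ 0` these tend
to `2 cosh x` (pbc) and `2 e^x` (obc). -/
theorem dual_ginibre_sff (N L : ℕ) (hN : 1 ≤ N) (hL : 1 ≤ L)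
    (x : ℝ) (hx : 0 ≤ x) (Ns Ls : ℕ → ℕ) (hNs : ∀ n, 1 ≤ Ns n) (hLs : ∀ n, 1 ≤ Ls n)
    (hNtop : Tendsto (fun n => (Ns n : ℝ)) atTop atTop)
    (hscal : Tendsto (fun n => 2 * (Ls n : ℝ) / (Ns n : ℝ)) atTop (nhds x)) :
    ((ginibreT N) ^ L).trace
        = (1 + 1 / (N : ℝ)) ^ (2 * L) + (1 - 1 / (N : ℝ)) ^ (2 * L)
    ∧ (∑ i : Fin 2, ∑ j : Fin 2, ((ginibreT N) ^ (L - 1)) i j)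
        = 2 * (1 + 1 / (N : ℝ)) ^ (2 * (L - 1))
    ∧ Tendsto (fun n => ((ginibreT (Ns n)) ^ (Ls n)).trace) atTop
        (nhds (2 * Real.cosh x))
    ∧ Tendsto (fun n => ∑ i : Fin 2, ∑ j : Fin 2, ((ginibreT (Ns n)) ^ (Ls n - 1)) i j)
        atTop (nhds (2 * Real.exp x)) := by
  have htr : ∀ N L : ℕ, ((ginibreT N) ^ L).trace
      = (1 + 1 / (N : ℝ)) ^ (2 * L) + (1 - 1 / (N : ℝ)) ^ (2 * L) := by
    intro N L
    rw [ginibreT_pow]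
    simp [Matrix.trace_fin_two]
  have hsum : ∀ N L : ℕ, (∑ i : Fin 2, ∑ j : Fin 2, ((ginibreT N) ^ L) i j)
      = 2 * (1 + 1 / (N : ℝ)) ^ (2 * L) := by
    intro N L
    rw [ginibreT_pow]
    simp [Fin.sum_univ_two]
    ring
  refine ⟨htr N L, hsum N (L - 1), ?_, ?_⟩
  · have hp := ginibre_key x 1 Ns Ls hNtop hscal
    have hm := ginibre_key x (-1) Ns Ls hNtop hscal
    simp only [mul_one, mul_neg_one] at hp hm
    have hm' : Tendsto (fun n => (1 - 1 / (Ns n : ℝ)) ^ (2 * Ls n)) atTop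
        (nhds (Real.exp (-x))) := by
      refine hm.congr fun n => ?_
      rw [neg_div, ← sub_eq_add_neg]
    have hcosh : 2 * Real.cosh x = Real.exp x + Real.exp (-x) := by
      rw [Real.cosh_eq]; ring
    rw [hcosh]
    exact (hp.add hm').congr fun n => (htr _ _).symm
  · have hscal' : Tendsto (fun n => 2 * ((Ls n - 1 : ℕ) : ℝ) / (Ns n : ℝ)) atTop (nhds x) := by
      have h0 : Tendsto (fun n => 2 / (Ns n : ℝ)) atTop (nhds 0) := by
        simpa [div_eq_mul_inv] using (tendsto_inv_atTop_zero.comp hNtop).const_mul (2:ℝ)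
      have := hscal.sub h0
      rw [sub_zero] at this
      refine this.congr fun n => ?_
      have : ((Ls n - 1 : ℕ) : ℝ) = (Ls n : ℝ) - 1 := by
        have := hLs n
        push_cast [Nat.cast_sub this]
        ring
      rw [this]
      ring
    have hp := ginibre_key x 1 Ns (fun n => Ls n - 1) hNtop hscal'
    simp only [mul_one] at hp
    have := hp.const_mul (2:ℝ)
    refine this.congr fun n => ?_
    rw [hsum]
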